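/- There exists a function f : ℝ → ℝ such that f is continuous on the closed interval [0,1], f is not constant on [0,1], the set of points a ∈ [0,1] at which f cuts the real axis is uncountable, and f is not absolutely continuous on [0,1]. -/

import Mathlib

/-- `f` cuts the real axis at `a` (within `[0,1]`): `f a = 0` and every open interval
around `a` contains points `b, c` of `[0,1]` with `f b < 0` and `f c > 0`. -/
def CutsAxisAt (f : ℝ → ℝ) (a : ℝ) : Prop :=
  f a = 0 ∧ ∀ u v : ℝ, u < a → a < v →
    (∃ b ∈ Set.Ioo u v ∩ Set.Icc (0:ℝ) 1, f b < 0) ∧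
    (∃ c ∈ Set.Ioo u v ∩ Set.Icc (0:ℝ) 1, f c > 0)

/-- `f` is absolutely continuous on `[a, b]`. -/
def AbsolutelyContinuousOn (f : ℝ → ℝ) (a b : ℝ) : Prop :=
  ∀ ε > (0:ℝ), ∃ δ > (0:ℝ), ∀ n : ℕ, ∀ c d : Fin n → ℝ,
    (∀ i, a ≤ c i ∧ c i < d i ∧ d i ≤ b) →
    (Pairwise fun i j => Disjoint (Set.Ioo (c i) (d i)) (Set.Ioo (c j) (d j))) →
    (∑ i, (d i - c i)) < δ →
    (∑ i, |f (d i) - f (c i)|) < ε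

open Set Filter Metric Real Topology

/-!
Take `f x = d x * sin (d x)⁻¹` with `d x = infDist x C`, `C` the Cantor set. Since `C` is closed
and totally disconnected, every neighbourhood of a point of `C` contains a point off `C`, so `d`
sweeps an interval `[0, η]` there; as `t * sin t⁻¹` changes sign infinitely often near `0`, `f`
cuts the axis at every point of the uncountable set `C`. On the gap `(1/3, 2/3)` we have
`f (1/3 + s) = s * sin s⁻¹`, which moves by about `1 / (π k)` between consecutive peaks
`sinInvPeak k`, so intervals of arbitrarily small total length carry a harmonic sum of increments
and `f` is not absolutely continuous.
-/

lemma continuous_mul_sin_inv : Continuous fun t : ℝ => t * sin t⁻¹ := by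
  refine continuous_iff_continuousAt.2 fun t => ?_
  rcases eq_or_ne t 0 with rfl | ht
  · show Tendsto _ _ (𝓝 (0 * sin 0⁻¹))
    rw [zero_mul]
    refine squeeze_zero_norm (fun s => ?_) tendsto_norm_zero
    rw [norm_mul]
    exact mul_le_of_le_one_right (norm_nonneg _) (by simpa using abs_sin_le_one _)
  · exact continuousAt_id.mul (continuous_sin.continuousAt.comp (continuousAt_inv₀ ht))

noncomputable def sinInvPeak (k : ℕ) : ℝ := (π / 2 + k * π)⁻¹

lemma sinInvPeak_pos (k : ℕ) : 0 < sinInvPeak k := inv_pos.2 (by positivity)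

lemma sin_inv_sinInvPeak (k : ℕ) : sin (sinInvPeak k)⁻¹ = (-1) ^ k := by
  rw [sinInvPeak, inv_inv, sin_add_nat_mul_pi, sin_pi_div_two, mul_one]

lemma strictAnti_sinInvPeak : StrictAnti sinInvPeak := fun _ _ hjk =>
  inv_strictAnti₀ (by positivity) (by gcongr)

lemma tendsto_sinInvPeak : Tendsto sinInvPeak atTop (𝓝 0) :=
  tendsto_inv_atTop_zero.comp <| tendsto_atTop_add_const_left _ _ <|
    tendsto_natCast_atTop_atTop.atTop_mul_const pi_pos

lemma not_summable_sinInvPeak : ¬ Summable sinInvPeak := fun h => by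
  have hle : ∀ k : ℕ, ((k + 1 : ℕ) : ℝ)⁻¹ ≤ π * sinInvPeak k := fun k => by
    rw [sinInvPeak, ← div_eq_mul_inv, le_div_iff₀ (by positivity),
      inv_mul_le_iff₀ (by positivity)]
    push_cast
    nlinarith [pi_pos]
  exact Real.not_summable_natCast_inv <| (summable_nat_add_iff 1).1 <|
    (h.mul_left π).of_nonneg_of_le (fun _ => by positivity) hle

lemma exists_mul_sin_inv_neg_and_pos {η : ℝ} (hη : 0 < η) :
    (∃ t ∈ Ioo 0 η, t * sin t⁻¹ < 0) ∧ ∃ t ∈ Ioo 0 η, 0 < t * sin t⁻¹ := by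
  obtain ⟨N, hN⟩ := eventually_atTop.1 (tendsto_sinInvPeak.eventually (gt_mem_nhds hη))
  have hmem : ∀ k, N ≤ k → sinInvPeak k ∈ Ioo 0 η := fun k hk =>
    ⟨sinInvPeak_pos k, hN k hk⟩
  refine ⟨⟨_, hmem (2 * N + 1) (by omega), ?_⟩, ⟨_, hmem (2 * N) (by omega), ?_⟩⟩
  · rw [sin_inv_sinInvPeak, Odd.neg_one_pow ⟨N, rfl⟩, mul_neg_one, neg_lt_zero]
    exact sinInvPeak_pos _
  · rw [sin_inv_sinInvPeak, Even.neg_one_pow ⟨N, two_mul N⟩, mul_one]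
    exact sinInvPeak_pos _

lemma exists_mem_Ioo_inter_unitInterval_notMem {C : Set ℝ} (hC : IsTotallyDisconnected C)
    {a u v : ℝ} (ha : a ∈ Icc (0 : ℝ) 1) (hu : u < a) (hv : a < v) :
    ∃ x ∈ Ioo u v ∩ Icc 0 1, x ∉ C := by
  by_contra! h
  set lo := max ((u + a) / 2) 0
  set hi := min ((a + v) / 2) 1
  have hlohi : lo < hi := max_lt (lt_min (by linarith) (by linarith [ha.2]))
    (lt_min (by linarith [ha.1]) one_pos)
  have hsub : Icc lo hi ⊆ Ioo u v ∩ Icc 0 1 := fun x ⟨hlo, hhi⟩ =>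
    ⟨⟨by linarith [le_max_left ((u + a) / 2) 0], by linarith [min_le_left ((a + v) / 2) 1]⟩,
      le_max_right _ _ |>.trans hlo, hhi.trans (min_le_right _ _)⟩
  exact hlohi.ne (hC _ (fun x hx => h x (hsub hx)) isPreconnected_Icc
    (left_mem_Icc.2 hlohi.le) (right_mem_Icc.2 hlohi.le))

lemma cutsAxisAt_comp_infDist {g : ℝ → ℝ} (hg0 : g 0 = 0)
    (hg : ∀ η > 0, (∃ t ∈ Ioo 0 η, g t < 0) ∧ ∃ t ∈ Ioo 0 η, 0 < g t)
    {C : Set ℝ} (hC : IsClosed C) (hCtd : IsTotallyDisconnected C) {a : ℝ} (ha : a ∈ C)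
    (ha01 : a ∈ Icc (0 : ℝ) 1) : CutsAxisAt (fun x => g (infDist x C)) a := by
  refine ⟨by simp [infDist_zero_of_mem ha, hg0], fun u v hu hv => ?_⟩
  have hI : (Ioo u v ∩ Icc (0 : ℝ) 1).OrdConnected := ordConnected_Ioo.inter ordConnected_Icc
  obtain ⟨x, hxI, hxC⟩ := exists_mem_Ioo_inter_unitInterval_notMem hCtd ha01 hu hv
  have hd : 0 < infDist x C := (hC.notMem_iff_infDist_pos ⟨a, ha⟩).1 hxC
  have hval : ∀ t ∈ Ioo 0 (infDist x C), ∃ y ∈ Ioo u v ∩ Icc 0 1, infDist y C = t := by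
    intro t ht
    obtain ⟨y, hy, hyt⟩ :=
      intermediate_value_uIcc (a := a) (b := x) (continuous_infDist_pt C).continuousOn
      (by rw [infDist_zero_of_mem ha, uIcc_of_le hd.le]; exact Ioo_subset_Icc_self ht)
    exact ⟨y, hI.uIcc_subset ⟨⟨hu, hv⟩, ha01⟩ hxI hy, hyt⟩
  obtain ⟨⟨t, ht, hgt⟩, t', ht', hgt'⟩ := hg _ hd
  obtain ⟨b, hb, rfl⟩ := hval t ht
  obtain ⟨c, hc, rfl⟩ := hval t' ht'
  exact ⟨⟨b, hb, hgt⟩, c, hc, hgt'⟩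

lemma infDist_add_eq_of_gap {C : Set ℝ} {p s : ℝ} (hp : p ∈ C) (hs : 0 ≤ s)
    (hgap : ∀ y ∈ C, y ≤ p ∨ p + 2 * s ≤ y) : infDist (p + s) C = s := by
  refine le_antisymm ?_ ((le_infDist ⟨p, hp⟩).2 fun y hy => ?_)
  · simpa [Real.dist_eq, abs_of_nonneg hs] using infDist_le_dist_of_mem (x := p + s) hp
  · rw [Real.dist_eq, le_abs]
    rcases hgap y hy with h | h
    · left; linarith
    · right; linarith

lemma not_absolutelyContinuousOn_of_eq_mul_sin_inv {f : ℝ → ℝ} {p r a b : ℝ} (hr : 0 < r)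
    (hf : ∀ s ∈ Ioc 0 r, f (p + s) = s * sin s⁻¹) (ha : a ≤ p) (hb : p + r ≤ b) :
    ¬ AbsolutelyContinuousOn f a b := by
  intro hac
  obtain ⟨δ, hδ, H⟩ := hac 1 one_pos
  obtain ⟨m, hm⟩ := (tendsto_sinInvPeak.eventually (gt_mem_nhds (lt_min hδ hr))).exists
  set x : ℕ → ℝ := fun i => sinInvPeak (i + m)
  have hx_anti : StrictAnti x := fun i j hij => strictAnti_sinInvPeak (by omega)
  have hx_pos : ∀ i, 0 < x i := fun i => sinInvPeak_pos _
  have hx_lt : ∀ i, x i < min δ r := fun i =>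
    (hx_anti.antitone i.zero_le).trans_lt (by simp only [x, zero_add]; exact hm)
  have hfx : ∀ i, f (p + x i) = (-1) ^ (i + m) * x i := fun i => by
    rw [hf _ ⟨hx_pos i, (hx_lt i).le.trans (min_le_right _ _)⟩, sin_inv_sinInvPeak, mul_comm]
  obtain ⟨L, hL⟩ : ∃ L, 1 ≤ ∑ i ∈ Finset.range L, x i :=
    (((not_summable_iff_tendsto_nat_atTop_of_nonneg fun i => (hx_pos i).le).1
      (mt (summable_nat_add_iff m).1 not_summable_sinInvPeak)).eventually_ge_atTop 1).exists
  have hbounds : ∀ i : Fin L, a ≤ p + x (i + 1) ∧ p + x (i + 1) < p + x i ∧ p + x i ≤ b :=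
    fun i => ⟨by linarith [hx_pos (i + 1)], by linarith [hx_anti (Nat.lt_succ_self i)],
      by linarith [(hx_lt i).trans_le (min_le_right _ _)]⟩
  have hdisj : Pairwise fun i j : Fin L =>
      Disjoint (Ioo (p + x (i + 1)) (p + x i)) (Ioo (p + x (j + 1)) (p + x j)) :=
    (Antitone.pairwise_disjoint_on_Ioo_succ (f := fun i => p + x i)
      fun _ _ h => by simpa using hx_anti.antitone h).comp_of_injective Fin.val_injective
  have hlength : ∑ i : Fin L, (p + x i - (p + x (i + 1))) < δ := by
    rw [Fin.sum_univ_eq_sum_range (fun i => p + x i - (p + x (i + 1))), Finset.sum_range_sub']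
    linarith [hx_pos L, (hx_lt 0).trans_le (min_le_left _ _)]
  have hvar := H L _ _ hbounds hdisj hlength
  rw [Fin.sum_univ_eq_sum_range (fun i => |f (p + x i) - f (p + x (i + 1))|)] at hvar
  refine hvar.not_ge (hL.trans (Finset.sum_le_sum fun i _ => ?_))
  have hjump : f (p + x i) - f (p + x (i + 1)) = (-1) ^ (i + m) * (x i + x (i + 1)) := by
    rw [hfx, hfx, show i + 1 + m = i + m + 1 by omega, pow_succ]; ring
  rw [hjump, abs_mul, abs_neg_one_pow, one_mul, abs_of_pos (by linarith [hx_pos i, hx_pos (i + 1)])]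
  linarith [hx_pos (i + 1)]

lemma one_mem_preCantorSet (n : ℕ) : 1 ∈ preCantorSet n := by
  induction n with
  | zero => simp
  | succ n ih => exact Or.inr ⟨1, ih, by norm_num⟩

lemma one_third_mem_cantorSet : 1 / 3 ∈ cantorSet := by
  rw [cantorSet_eq_union_halves]
  exact Or.inl ⟨1, mem_iInter.2 one_mem_preCantorSet, rfl⟩

lemma le_one_third_or_two_thirds_le_of_mem_cantorSet {x : ℝ} (hx : x ∈ cantorSet) :
    x ≤ 1 / 3 ∨ 2 / 3 ≤ x := by
  rw [cantorSet_eq_union_halves] at hx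
  rcases hx with ⟨y, hy, rfl⟩ | ⟨y, hy, rfl⟩
  · left; linarith [(cantorSet_subset_unitInterval hy).2]
  · right; linarith [(cantorSet_subset_unitInterval hy).1]

lemma isTotallyDisconnected_cantorSet : IsTotallyDisconnected cantorSet :=
  totallyDisconnectedSpace_subtype_iff.1 cantorSetHomeomorphNatToBool.symm.totallyDisconnectedSpace

lemma not_countable_cantorSet : ¬ cantorSet.Countable := fun h => by
  have := h.to_subtype
  have := cantorSetEquivNatToBool.symm.injective.countable
  rw [← Cardinal.mk_le_aleph0_iff] at this
  exact Cardinal.aleph0_lt_continuum.not_ge (by simpa using this)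

theorem stmt_0 :
    ∃ f : ℝ → ℝ,
      ContinuousOn f (Set.Icc 0 1) ∧
      (∃ x ∈ Set.Icc (0:ℝ) 1, ∃ y ∈ Set.Icc (0:ℝ) 1, f x ≠ f y) ∧
      ¬ (Set.Countable {a ∈ Set.Icc (0:ℝ) 1 | CutsAxisAt f a}) ∧
      ¬ AbsolutelyContinuousOn f 0 1 := by
  have hcut : ∀ a ∈ cantorSet,
      CutsAxisAt (fun x => infDist x cantorSet * sin (infDist x cantorSet)⁻¹) a := fun a ha =>
    cutsAxisAt_comp_infDist (g := fun t => t * sin t⁻¹) (zero_mul _)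
      (fun _ => exists_mul_sin_inv_neg_and_pos)
      isClosed_cantorSet isTotallyDisconnected_cantorSet ha (cantorSet_subset_unitInterval ha)
  refine ⟨fun x => infDist x cantorSet * sin (infDist x cantorSet)⁻¹,
    (continuous_mul_sin_inv.comp (continuous_infDist_pt _)).continuousOn, ?_, fun h => ?_, ?_⟩
  · obtain ⟨hf0, hsign⟩ := hcut 0 zero_mem_cantorSet
    obtain ⟨c, ⟨-, hc⟩, hfc⟩ := (hsign (-1) 1 (by norm_num) one_pos).2
    exact ⟨c, hc, 0, left_mem_Icc.2 zero_le_one, hfc.ne'.trans_eq hf0.symm⟩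
  · refine not_countable_cantorSet (Countable.mono ?_ h)
    exact fun a ha => ⟨cantorSet_subset_unitInterval ha, hcut a ha⟩
  · refine not_absolutelyContinuousOn_of_eq_mul_sin_inv (p := 1 / 3) (r := 1 / 6) (by norm_num)
      (fun s hs => ?_) (by norm_num) (by norm_num)
    rw [infDist_add_eq_of_gap one_third_mem_cantorSet hs.1.le fun y hy =>
      (le_one_third_or_two_thirds_le_of_mem_cantorSet hy).imp_right fun h => by linarith [hs.2]]
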